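/- arXiv:1101.4813 — 5 statements merged into one kernel-verified Lean document; each statement's English description precedes it below -/
import Mathlib

section
/- The rewriting system on words over the alphabet {H, E} ∪ {W_i : i ∈ ℕ} with rules H·W_i → W_{i+1}·H, H·E → E·H, and W_i·W_j → W_j·W_i whenever i < j, is terminating. -/
/-- Letters of the alphabet: `H`, `E` and `W i` for `i : ℕ`. -/
inductive Letter
  | H : Letter
  | E : Letter
  | W : ℕ → Letter

open Letter

/-- One rewriting step: a two-letter factor matching the left-hand side of a rule
is replaced by the right-hand side, anywhere in the word. -/
inductive Step : List Letter → List Letter → Prop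
  | hw (u v : List Letter) (i : ℕ) :
      Step (u ++ [H, W i] ++ v) (u ++ [W (i + 1), H] ++ v)
  | he (u v : List Letter) :
      Step (u ++ [H, E] ++ v) (u ++ [E, H] ++ v)
  | ww (u v : List Letter) (i j : ℕ) (hij : i < j) :
      Step (u ++ [W i, W j] ++ v) (u ++ [W j, W i] ++ v)

/-!
Every step strictly decreases, lexicographically, the pair (number of pairs `H … x`
with `x ≠ H`, number of pairs `W i … W j` with `i < j`). The first two rules move an `H`
one place to the right past a non-`H` letter, lowering the first count by one (the
relabelling `W i ↦ W (i + 1)` may raise the second count, which is why the order is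
lexicographic); the third rule fixes the positions of the `H`'s and lowers the second
count by one.
-/

section Inversions

variable {α : Type*} (r : α → α → Prop) [DecidableRel r]

/-- The number of pairs of positions `p < q` in a list with `r l[p] l[q]`. -/
def inversionCount : List α → ℕ
  | [] => 0
  | x :: t => t.countP (fun y => r x y) + inversionCount t

variable {r}

theorem inversionCount_swap_lt {a b : α} (hab : r a b) (hba : ¬ r b a) (u v : List α) :
    inversionCount r (u ++ [b, a] ++ v) < inversionCount r (u ++ [a, b] ++ v) := by
  induction u with
  | nil =>
    simp only [List.nil_append, List.cons_append, inversionCount, List.countP_cons, hab, hba,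
      decide_true, decide_false, Bool.false_eq_true, if_true, if_false]
    omega
  | cons x u ih =>
    have hperm : (u ++ [b, a] ++ v).Perm (u ++ [a, b] ++ v) :=
      ((List.Perm.swap a b []).append_left u).append_right v
    simp only [List.cons_append, inversionCount, hperm.countP_eq]
    omega

end Inversions

def Letter.isH : Letter → Bool
  | H => true
  | _ => false

def Letter.WLt : Letter → Letter → Prop
  | W i, W j => i < j
  | _, _ => False

instance : DecidableRel Letter.WLt := fun x y => by
  cases x <;> cases y <;> unfold Letter.WLt <;> infer_instance

def weight (w : List Letter) : ℕ ×ₗ ℕ :=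
  toLex (inversionCount (· > ·) (w.map Letter.isH), inversionCount Letter.WLt w)

theorem weight_lt_of_step {x y : List Letter} (h : Step x y) : weight y < weight x := by
  simp only [weight, Prod.Lex.toLex_lt_toLex]
  cases h with
  | hw u v i =>
    left
    simpa [Letter.isH] using inversionCount_swap_lt (r := (· > ·)) (a := true) (b := false)
      rfl (by decide) (u.map Letter.isH) (v.map Letter.isH)
  | he u v =>
    left
    simpa [Letter.isH] using inversionCount_swap_lt (r := (· > ·)) (a := true) (b := false)
      rfl (by decide) (u.map Letter.isH) (v.map Letter.isH)
  | ww u v i j hij =>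
    right
    refine ⟨by simp [Letter.isH], ?_⟩
    exact inversionCount_swap_lt (a := W i) (b := W j) hij (Nat.lt_asymm hij) u v

/-- The rewriting system is terminating: there is no infinite sequence of
rewriting steps. -/
theorem step_terminating :
    ∀ f : ℕ → List Letter, ¬ (∀ n, Step (f n) (f (n + 1))) := by
  intro f hf
  obtain ⟨n, hn⟩ := WellFounded.not_rel_apply_succ (r := (· < ·)) (weight ∘ f)
  exact hn (weight_lt_of_step (hf n))
end

section
/- Composition of cyclic strategies is well-defined: given cyclic strategies σ on A ⊸ B and τ on B ⊸ C (reflexive transitive relations satisfying the polarity condition), the relation on moves of A ⊕ C obtained by restricting the transitive closure of σ ∪ τ on A ⊕ B ⊕ C to moves of A and C is again reflexive, transitive, and satisfies the polarity condition with respect to the polarities of A ⊸ C. -/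
section

variable {A B C : Type*}

/-- Embedding of the moves of `A ⊕ B` into `A ⊕ (B ⊕ C)`. -/
def embL : A ⊕ B → A ⊕ (B ⊕ C) := Sum.map id Sum.inl

/-- Embedding of the moves of `B ⊕ C` into `A ⊕ (B ⊕ C)`. -/
def embR : B ⊕ C → A ⊕ (B ⊕ C) := Sum.inr

/-- Embedding of the outer moves `A ⊕ C` into `A ⊕ (B ⊕ C)`. -/
def embO : A ⊕ C → A ⊕ (B ⊕ C) := Sum.map id Sum.inr

/-- The union of `σ` and `τ` as a relation on `A ⊕ (B ⊕ C)`. -/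
def unionRel (σ : A ⊕ B → A ⊕ B → Prop) (τ : B ⊕ C → B ⊕ C → Prop) :
    A ⊕ (B ⊕ C) → A ⊕ (B ⊕ C) → Prop := fun x y =>
  (∃ x' y', σ x' y' ∧ x = embL x' ∧ y = embL y') ∨
  (∃ x' y', τ x' y' ∧ x = embR x' ∧ y = embR y')

/-- The composite of `σ : A → B` and `τ : B → C`: the transitive closure of
`σ ∪ τ` on `A ⊕ B ⊕ C`, restricted to the moves of `A` and `C`. -/
def gamesComp (σ : A ⊕ B → A ⊕ B → Prop) (τ : B ⊕ C → B ⊕ C → Prop) :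
    A ⊕ C → A ⊕ C → Prop := fun x y =>
  Relation.TransGen (unionRel σ τ) (embO x) (embO y)

/-- The polarity function of the game `A ⊸ B`:
`-λ_A` on moves of `A` and `λ_B` on moves of `B`. -/
def polArrow (lamA : A → ℤ) (lamB : B → ℤ) : A ⊕ B → ℤ :=
  Sum.elim (fun a => -lamA a) lamB

end


private lemma tg_first {α} {R : α → α → Prop} {p q : α}
    (h : Relation.TransGen R p q) : p ≠ q → ∃ r, R p r ∧ p ≠ r := by
  induction h with
  | single h => exact fun hne => ⟨_, h, hne⟩
  | @tail b c hpb hbc ih =>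
      intro hne
      by_cases h' : p = b
      · subst h'; exact ⟨c, hbc, hne⟩
      · exact ih h' 

private lemma tg_last {α} {R : α → α → Prop} {p q : α}
    (h : Relation.TransGen R p q) : p ≠ q → ∃ r, R r q ∧ r ≠ q := by
  induction h with
  | single h => exact fun hne => ⟨_, h, hne⟩
  | @tail b c hpb hbc ih =>
      intro hne
      by_cases h' : b = c
      · subst h'
        obtain ⟨r, hr, hrne⟩ := ih hne
        exact ⟨r, hr, hrne⟩
      · exact ⟨b, hbc, h'⟩

/-- Composition of cyclic strategies is well-defined: the composite of cyclic
strategies `σ` on `A ⊸ B` and `τ` on `B ⊸ C` is reflexive, transitive, and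
satisfies the polarity condition with respect to the polarities of `A ⊸ C`. -/
theorem cyclic_strategies_compose {A B C : Type*}
    (lamA : A → ℤ) (lamB : B → ℤ) (lamC : C → ℤ)
    (hA : ∀ a, lamA a = -1 ∨ lamA a = 1)
    (hB : ∀ b, lamB b = -1 ∨ lamB b = 1)
    (hC : ∀ c, lamC c = -1 ∨ lamC c = 1)
    (σ : A ⊕ B → A ⊕ B → Prop) (τ : B ⊕ C → B ⊕ C → Prop)
    (hσrefl : ∀ x, σ x x) (hσtrans : ∀ x y z, σ x y → σ y z → σ x z)
    (hσpol : ∀ m n, σ m n → m ≠ n →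
      polArrow lamA lamB m = -1 ∧ polArrow lamA lamB n = 1)
    (hτrefl : ∀ x, τ x x) (hτtrans : ∀ x y z, τ x y → τ y z → τ x z)
    (hτpol : ∀ m n, τ m n → m ≠ n →
      polArrow lamB lamC m = -1 ∧ polArrow lamB lamC n = 1) :
    (∀ x, gamesComp σ τ x x) ∧
    (∀ x y z, gamesComp σ τ x y → gamesComp σ τ y z → gamesComp σ τ x z) ∧
    (∀ m n, gamesComp σ τ m n → m ≠ n →
      polArrow lamA lamC m = -1 ∧ polArrow lamA lamC n = 1) := by
  refine ⟨?_, ?_, ?_⟩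
  · intro x
    apply Relation.TransGen.single
    cases x with
    | inl a => exact Or.inl ⟨Sum.inl a, Sum.inl a, hσrefl _, rfl, rfl⟩
    | inr c => exact Or.inr ⟨Sum.inr c, Sum.inr c, hτrefl _, rfl, rfl⟩
  · intro x y z hxy hyz
    exact Relation.TransGen.trans hxy hyz
  · intro m n h hne
    have hOne : embO (B := B) (C := C) m ≠ embO n := by
      intro he
      apply hne
      cases m <;> cases n <;> simp [embO, Sum.map] at he <;> simp [he]
    constructor
    · obtain ⟨r, hr, hrne⟩ := tg_first h hOne
      cases m with
      | inl a =>
          rcases hr with ⟨x', y', hs, hx, hy⟩ | ⟨x', y', ht, hx, hy⟩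
          · have hx' : x' = Sum.inl a := by
              cases x' <;> simp [embO, embL, Sum.map] at hx <;> simp [hx]
            subst hx'
            have hne' : (Sum.inl a : A ⊕ B) ≠ y' := by
              intro he; apply hrne; rw [hy, ← he]; rfl
            have := (hσpol _ _ hs (fun he => hne' he)).1
            simpa [polArrow] using this
          · exfalso
            simp [embO, embR, Sum.map] at hx
      | inr c =>
          rcases hr with ⟨x', y', hs, hx, hy⟩ | ⟨x', y', ht, hx, hy⟩
          · exfalso
            cases x' <;> simp [embO, embL, Sum.map] at hx
          · have hx' : x' = Sum.inr c := by
              cases x' <;> simp [embO, embR, Sum.map] at hx <;> simp [hx]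
            subst hx'
            have hne' : (Sum.inr c : B ⊕ C) ≠ y' := by
              intro he; apply hrne; rw [hy, ← he]; rfl
            have := (hτpol _ _ ht (fun he => hne' he)).1
            simpa [polArrow] using this
    · obtain ⟨r, hr, hrne⟩ := tg_last h hOne
      cases n with
      | inl a =>
          rcases hr with ⟨x', y', hs, hx, hy⟩ | ⟨x', y', ht, hx, hy⟩
          · have hy' : y' = Sum.inl a := by
              cases y' <;> simp [embO, embL, Sum.map] at hy <;> simp [hy]
            subst hy'
            have hne' : x' ≠ (Sum.inl a : A ⊕ B) := by
              intro he; apply hrne; rw [hx, he]; rfl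
            have := (hσpol _ _ hs (fun he => hne' he)).2
            simpa [polArrow] using this
          · exfalso
            simp [embO, embR, Sum.map] at hy
      | inr c =>
          rcases hr with ⟨x', y', hs, hx, hy⟩ | ⟨x', y', ht, hx, hy⟩
          · exfalso
            cases y' <;> simp [embO, embL, Sum.map] at hy
          · have hy' : y' = Sum.inr c := by
              cases y' <;> simp [embO, embR, Sum.map] at hy <;> simp [hy]
            subst hy'
            have hne' : x' ≠ (Sum.inr c : B ⊕ C) := by
              intro he; apply hrne; rw [hx, he]; rfl
            have := (hτpol _ _ ht (fun he => hne' he)).2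
            simpa [polArrow] using this
end

section
/- The identity strategy is neutral for composition of cyclic strategies: with the identity strategy on a game A defined by relating the two copies m', m of each move according to its polarity (m' ≤ m if λ(m)=+1, m ≤ m' if λ(m)=-1, plus reflexivity), composing any cyclic strategy σ : A → B with the identity on A (resp. on B) yields σ. -/
section

variable {A B C : Type*}

/-- The identity strategy on a game `A`, as a relation on `A ⊕ A` (source copy
on the left): the source copy of a Proponent move justifies its target copy,
and the target copy of an Opponent move justifies its source copy. -/
def gameIdRel (lamA : A → ℤ) : A ⊕ A → A ⊕ A → Prop := fun x y =>
  x = y ∨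
  (∃ a, x = Sum.inl a ∧ y = Sum.inr a ∧ lamA a = 1) ∨
  (∃ a, x = Sum.inr a ∧ y = Sum.inl a ∧ lamA a = -1)

end


/-- The identity strategy is neutral for composition of cyclic strategies. -/
theorem id_neutral_for_comp {A B : Type*}
    (lamA : A → ℤ) (lamB : B → ℤ)
    (hA : ∀ a, lamA a = -1 ∨ lamA a = 1)
    (hB : ∀ b, lamB b = -1 ∨ lamB b = 1)
    (σ : A ⊕ B → A ⊕ B → Prop)
    (hσrefl : ∀ x, σ x x) (hσtrans : ∀ x y z, σ x y → σ y z → σ x z)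
    (hσpol : ∀ m n, σ m n → m ≠ n →
      polArrow lamA lamB m = -1 ∧ polArrow lamA lamB n = 1) :
    gamesComp (gameIdRel lamA) σ = σ ∧ gamesComp σ (gameIdRel lamB) = σ := by
  constructor
  · funext x y
    apply propext
    constructor
    · intro h
      set φ : A ⊕ (A ⊕ B) → A ⊕ B := Sum.elim Sum.inl id with hφ
      have step : ∀ u v, unionRel (gameIdRel lamA) σ u v → σ (φ u) (φ v) := by
        intro u v hstep
        rcases hstep with ⟨x', y', hxy, hu, hv⟩ | ⟨x', y', hxy, hu, hv⟩
        · subst hu; subst hv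
          rcases hxy with rfl | ⟨a, rfl, rfl, _⟩ | ⟨a, rfl, rfl, _⟩ <;>
            simp only [embL, Sum.map, Sum.elim_inl, Sum.elim_inr, id_eq, φ] <;>
            exact hσrefl _
        · subst hu; subst hv
          simpa [embR, φ] using hxy
      have key : ∀ u v, Relation.TransGen (unionRel (gameIdRel lamA) σ) u v →
          σ (φ u) (φ v) := by
        intro u v huv
        induction huv with
        | single h1 => exact step _ _ h1
        | tail hab h1 ih => exact hσtrans _ _ _ ih (step _ _ h1)
      have hk := key _ _ h
      have hx : φ (embO x) = x := by cases x <;> simp [embO, φ]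
      have hy : φ (embO y) = y := by cases y <;> simp [embO, φ]
      rwa [hx, hy] at hk
    · intro hxy
      by_cases hne : x = y
      · subst hne
        cases x with
        | inl a =>
          exact Relation.TransGen.single (Or.inl ⟨Sum.inl a, Sum.inl a, Or.inl rfl, rfl, rfl⟩)
        | inr b =>
          exact Relation.TransGen.single (Or.inr ⟨Sum.inr b, Sum.inr b, hσrefl _, rfl, rfl⟩)
      · obtain ⟨hpx, hpy⟩ := hσpol x y hxy hne
        have mid : unionRel (gameIdRel lamA) σ (embR x) (embR y) :=
          Or.inr ⟨x, y, hxy, rfl, rfl⟩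
        have start : Relation.TransGen (unionRel (gameIdRel lamA) σ) (embO x) (embR y) := by
          cases x with
          | inl a =>
            have ha : lamA a = 1 := by
              have : -lamA a = -1 := by simpa [polArrow] using hpx
              omega
            refine Relation.TransGen.head ?_ (Relation.TransGen.single mid)
            exact Or.inl ⟨Sum.inl a, Sum.inr a, Or.inr (Or.inl ⟨a, rfl, rfl, ha⟩), rfl, rfl⟩
          | inr b => exact Relation.TransGen.single mid
        cases y with
        | inl a =>
          have ha : lamA a = -1 := by
            have : -lamA a = 1 := by simpa [polArrow] using hpy
            omega
          refine start.tail ?_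
          exact Or.inl ⟨Sum.inr a, Sum.inl a, Or.inr (Or.inr ⟨a, rfl, rfl, ha⟩), rfl, rfl⟩
        | inr b => exact start
  · funext x y
    apply propext
    constructor
    · intro h
      set φ : A ⊕ (B ⊕ B) → A ⊕ B := Sum.elim Sum.inl (Sum.elim Sum.inr Sum.inr) with hφ
      have step : ∀ u v, unionRel σ (gameIdRel lamB) u v → σ (φ u) (φ v) := by
        intro u v hstep
        rcases hstep with ⟨x', y', hxy, hu, hv⟩ | ⟨x', y', hxy, hu, hv⟩
        · subst hu; subst hv
          have h1 : φ (embL x') = x' := by cases x' <;> simp [embL, φ]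
          have h2 : φ (embL y') = y' := by cases y' <;> simp [embL, φ]
          rw [h1, h2]; exact hxy
        · subst hu; subst hv
          rcases hxy with rfl | ⟨b, rfl, rfl, _⟩ | ⟨b, rfl, rfl, _⟩ <;>
            simp only [embR, Sum.elim_inl, Sum.elim_inr, φ] <;> exact hσrefl _
      have key : ∀ u v, Relation.TransGen (unionRel σ (gameIdRel lamB)) u v →
          σ (φ u) (φ v) := by
        intro u v huv
        induction huv with
        | single h1 => exact step _ _ h1
        | tail hab h1 ih => exact hσtrans _ _ _ ih (step _ _ h1)
      have hk := key _ _ h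
      have hx : φ (embO x) = x := by cases x <;> simp [embO, φ]
      have hy : φ (embO y) = y := by cases y <;> simp [embO, φ]
      rwa [hx, hy] at hk
    · intro hxy
      by_cases hne : x = y
      · subst hne
        cases x with
        | inl a =>
          exact Relation.TransGen.single (Or.inl ⟨Sum.inl a, Sum.inl a, hσrefl _, rfl, rfl⟩)
        | inr b =>
          exact Relation.TransGen.single (Or.inr ⟨Sum.inr b, Sum.inr b, Or.inl rfl, rfl, rfl⟩)
      · obtain ⟨hpx, hpy⟩ := hσpol x y hxy hne
        have mid : unionRel σ (gameIdRel lamB) (embL x) (embL y) :=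
          Or.inl ⟨x, y, hxy, rfl, rfl⟩
        have start : Relation.TransGen (unionRel σ (gameIdRel lamB)) (embO x) (embL y) := by
          cases x with
          | inl a => exact Relation.TransGen.single mid
          | inr b =>
            have hb : lamB b = -1 := by simpa [polArrow] using hpx
            refine Relation.TransGen.head ?_ (Relation.TransGen.single mid)
            exact Or.inr ⟨Sum.inr b, Sum.inl b, Or.inr (Or.inr ⟨b, rfl, rfl, hb⟩), rfl, rfl⟩
        cases y with
        | inl a => exact start
        | inr b =>
          have hb : lamB b = 1 := by simpa [polArrow] using hpy
          refine start.tail ?_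
          exact Or.inr ⟨Sum.inl b, Sum.inr b, Or.inr (Or.inl ⟨b, rfl, rfl, hb⟩), rfl, rfl⟩
end

section
/- Acyclicity is not preserved by naive composition of strategies: there exist games A, B with two moves each and strategies σ : 0 → A and τ : A → B (both satisfying polarity and acyclicity with respect to their games) whose composite relation, together with the causality order of B, contains a cycle, hence is not a strategy. -/
set_option linter.unusedTactic false

/-- A relation is a strategy on a game given by polarities `pol` and causality
`le`: it is a partial order, it satisfies the polarity condition, and the
transitive closure of its union with the causality is acyclic (antisymmetric). -/
def IsStrategy {M : Type*} (pol : M → ℤ) (le : M → M → Prop)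
    (s : M → M → Prop) : Prop :=
  (∀ x, s x x) ∧ (∀ x y z, s x y → s y z → s x z) ∧
  (∀ x y, s x y → s y x → x = y) ∧
  (∀ m n, s m n → m ≠ n → pol m = -1 ∧ pol n = 1) ∧
  (∀ x y, Relation.TransGen (fun u v => s u v ∨ le u v) x y →
          Relation.TransGen (fun u v => s u v ∨ le u v) y x → x = y)

/-- If a relation is monotone for a valuation `f`, so is its transitive closure;
hence if `f` is injective the closure is antisymmetric. -/
lemma transGen_antisymm_of_val {M : Type*} (f : M → ℕ) (r : M → M → Prop)
    (hmono : ∀ x y, r x y → f x ≤ f y) (hinj : ∀ x y, f x = f y → x = y) :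
    ∀ x y, Relation.TransGen r x y → Relation.TransGen r y x → x = y := by
  have key : ∀ x y, Relation.TransGen r x y → f x ≤ f y := by
    intro x y h
    induction h with
    | single h => exact hmono _ _ h
    | tail _ h ih => exact le_trans ih (hmono _ _ h)
  intro x y h1 h2
  exact hinj _ _ (le_antisymm (key _ _ h1) (key _ _ h2))

/-- Acyclicity is not preserved by naive composition of strategies: there are
games `A`, `B` with two moves each, a strategy `σ : 0 → A` (i.e. a strategy on
`A`) and a strategy `τ : A → B` (on `A ⊸ B`) such that the composite relation
on the moves of `B`, together with the causality of `B`, contains a cycle. -/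
theorem composition_not_acyclic :
    ∃ (polA : Fin 2 → ℤ) (leA : Fin 2 → Fin 2 → Prop)
      (polB : Fin 2 → ℤ) (leB : Fin 2 → Fin 2 → Prop)
      (σ : Fin 2 → Fin 2 → Prop)
      (τ : Fin 2 ⊕ Fin 2 → Fin 2 ⊕ Fin 2 → Prop),
      -- the games: polarities valued in {-1, +1} and causality partial orders
      (∀ a, polA a = -1 ∨ polA a = 1) ∧ (∀ b, polB b = -1 ∨ polB b = 1) ∧
      IsPartialOrder (Fin 2) leA ∧ IsPartialOrder (Fin 2) leB ∧
      -- σ is a strategy on 0 ⊸ A = A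
      IsStrategy polA leA σ ∧
      -- τ is a strategy on A ⊸ B
      IsStrategy (Sum.elim (fun a => -polA a) polB)
        (fun x y => (∃ a a', x = Sum.inl a ∧ y = Sum.inl a' ∧ leA a a') ∨
                    (∃ b b', x = Sum.inr b ∧ y = Sum.inr b' ∧ leB b b')) τ ∧
      -- but the composite relation on B, together with the causality of B,
      -- contains a cycle
      (let u : Fin 2 ⊕ Fin 2 → Fin 2 ⊕ Fin 2 → Prop := fun x y =>
        (∃ a a', x = Sum.inl a ∧ y = Sum.inl a' ∧ σ a a') ∨ τ x y
       let comp : Fin 2 → Fin 2 → Prop := fun n n' =>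
        Relation.TransGen u (Sum.inr n) (Sum.inr n')
       ∃ x y, x ≠ y ∧
        Relation.TransGen (fun n n' => comp n n' ∨ leB n n') x y ∧
        Relation.TransGen (fun n n' => comp n n' ∨ leB n n') y x) := by
  -- A: move 0 Opponent, move 1 Proponent, trivial causality
  refine ⟨fun a => if a = 0 then -1 else 1, Eq,
  -- B: move 0 Proponent, move 1 Opponent, causality 0 ≤ 1
    fun b => if b = 0 then 1 else -1, fun b b' => b = b' ∨ (b = 0 ∧ b' = 1),
  -- σ : m₁ ≤ m₂
    fun a a' => a = a' ∨ (a = 0 ∧ a' = 1),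
  -- τ : n₂ ≤ m₁ and m₂ ≤ n₁
    fun x y => x = y ∨ (x = Sum.inr 1 ∧ y = Sum.inl 0) ∨
               (x = Sum.inl 1 ∧ y = Sum.inr 0),
    ?_, ?_, ?_, ?_, ?_, ?_, ?_⟩
  · decide
  · decide
  · exact { refl := fun a => rfl, trans := fun a b c h h' => h.trans h',
            antisymm := fun a b h h' => h }
  · exact { refl := fun b => Or.inl rfl, trans := by decide, antisymm := by decide }
  · refine ⟨by decide, by decide, by decide, by decide, ?_⟩
    exact transGen_antisymm_of_val (M := Fin 2) Fin.val _ (by beta_reduce; decide)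
      (by beta_reduce; decide)
  · refine ⟨by beta_reduce; decide, by beta_reduce; decide, by beta_reduce; decide,
      by beta_reduce; decide, ?_⟩
    -- valuation: inl 1 ↦ 0, inr 0 ↦ 1, inr 1 ↦ 2, inl 0 ↦ 3
    exact transGen_antisymm_of_val
      (Sum.elim (fun a => if a = 0 then 3 else 0) (fun b => if b = 0 then 1 else 2))
      _ (by beta_reduce; decide) (by beta_reduce; decide)
  · intro u comp
    refine ⟨1, 0, by decide, Relation.TransGen.single (Or.inl ?_),
      Relation.TransGen.single (Or.inr (Or.inr ⟨rfl, rfl⟩))⟩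
    -- comp 1 0 : inr 1 → inl 0 → inl 1 → inr 0
    exact Relation.TransGen.head (Or.inr (Or.inr (Or.inl ⟨rfl, rfl⟩)))
      (Relation.TransGen.head (Or.inl ⟨0, 1, rfl, rfl, Or.inr ⟨rfl, rfl⟩⟩)
        (Relation.TransGen.single (Or.inr (Or.inr (Or.inr ⟨rfl, rfl⟩)))))
end

section
/- The 'before' tensor of strategies is a strategy: if σ is a strategy on game G and τ is a strategy on game H, then the disjoint union of the relations ≤_σ and ≤_τ is a strategy on the game G ◁ H whose moves and polarities are the disjoint union and whose causality is the transitive closure of ≤_G ∪ ≤_H together with all pairs (g,h) for g a move of G and h a move of H. -/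
section

variable {M N : Type*}

/-- The causality of the game `G ◁ H` ("G before H"): the transitive closure of
the disjoint union of the causalities together with all pairs from `G` to `H`. -/
def beforeLe (leG : M → M → Prop) (leH : N → N → Prop) :
    M ⊕ N → M ⊕ N → Prop :=
  Relation.TransGen (fun x y =>
    (∃ m m', x = Sum.inl m ∧ y = Sum.inl m' ∧ leG m m') ∨
    (∃ n n', x = Sum.inr n ∧ y = Sum.inr n' ∧ leH n n') ∨
    (∃ m n, x = Sum.inl m ∧ y = Sum.inr n))

/-- The disjoint union of two strategy relations. -/
def beforeStrat (σ : M → M → Prop) (τ : N → N → Prop) :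
    M ⊕ N → M ⊕ N → Prop := fun x y =>
  (∃ m m', x = Sum.inl m ∧ y = Sum.inl m' ∧ σ m m') ∨
  (∃ n n', x = Sum.inr n ∧ y = Sum.inr n' ∧ τ n n')

end

section Aux

variable {M N : Type*} {leG : M → M → Prop} {leH : N → N → Prop}
  {σ : M → M → Prop} {τ : N → N → Prop}

lemma beforeLe_to_inl (hG : Transitive leG) {x : M ⊕ N} {m' : M}
    (h : beforeLe leG leH x (Sum.inl m')) :
    ∃ m, x = Sum.inl m ∧ leG m m' := by
  generalize hy : (Sum.inl m' : M ⊕ N) = y at h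
  induction h generalizing m' with
  | single h =>
    subst hy
    rcases h with ⟨a, b, rfl, hb, hab⟩ | ⟨a, b, rfl, hb, hab⟩ | ⟨a, b, rfl, hb⟩
    · exact ⟨a, rfl, (Sum.inl.inj hb) ▸ hab⟩
    · exact absurd hb (by simp)
    · exact absurd hb (by simp)
  | tail h1 h2 ih =>
    subst hy
    rcases h2 with ⟨a, b, rfl, hb, hab⟩ | ⟨a, b, ha, hb, hab⟩ | ⟨a, b, ha, hb⟩
    · obtain ⟨m, rfl, hm⟩ := ih rfl
      exact ⟨m, rfl, hG hm ((Sum.inl.inj hb) ▸ hab)⟩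
    · exact absurd hb (by simp)
    · exact absurd hb (by simp)

lemma beforeLe_from_inr (hH : Transitive leH) {y : M ⊕ N} {n : N}
    (h : beforeLe leG leH (Sum.inr n) y) :
    ∃ n', y = Sum.inr n' ∧ leH n n' := by
  induction h with
  | single h =>
    rcases h with ⟨a, b, ha, rfl, hab⟩ | ⟨a, b, ha, rfl, hab⟩ | ⟨a, b, ha, rfl⟩
    · exact absurd ha (by simp)
    · exact ⟨b, rfl, (Sum.inr.inj ha) ▸ hab⟩
    · exact absurd ha (by simp)
  | tail h1 h2 ih =>
    obtain ⟨n', rfl, hn⟩ := ih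
    rcases h2 with ⟨a, b, ha, rfl, hab⟩ | ⟨a, b, ha, rfl, hab⟩ | ⟨a, b, ha, rfl⟩
    · exact absurd ha (by simp)
    · exact ⟨b, rfl, hH hn ((Sum.inr.inj ha) ▸ hab)⟩
    · exact absurd ha (by simp)

lemma combined_to_inl (hG : Transitive leG) {x : M ⊕ N} {m' : M}
    (h : Relation.TransGen
      (fun u v => beforeStrat σ τ u v ∨ beforeLe leG leH u v) x (Sum.inl m')) :
    ∃ m, x = Sum.inl m ∧ Relation.TransGen (fun u v => σ u v ∨ leG u v) m m' := by
  generalize hy : (Sum.inl m' : M ⊕ N) = y at h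
  induction h generalizing m' with
  | single h =>
    subst hy
    rcases h with (⟨a, b, rfl, hb, hab⟩ | ⟨a, b, ha, hb, hab⟩) | h
    · exact ⟨a, rfl, Relation.TransGen.single (Or.inl ((Sum.inl.inj hb) ▸ hab))⟩
    · exact absurd hb (by simp)
    · obtain ⟨m, rfl, hm⟩ := beforeLe_to_inl hG h
      exact ⟨m, rfl, Relation.TransGen.single (Or.inr hm)⟩
  | tail h1 h2 ih =>
    subst hy
    rcases h2 with (⟨a, b, ha, hb, hab⟩ | ⟨a, b, ha, hb, hab⟩) | h
    · subst ha
      obtain ⟨m, rfl, hm⟩ := ih rfl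
      exact ⟨m, rfl, hm.tail (Or.inl ((Sum.inl.inj hb) ▸ hab))⟩
    · exact absurd hb (by simp)
    · obtain ⟨m2, rfl, hm2⟩ := beforeLe_to_inl hG h
      obtain ⟨m, rfl, hm⟩ := ih rfl
      exact ⟨m, rfl, hm.tail (Or.inr hm2)⟩

lemma combined_from_inr (hH : Transitive leH) {y : M ⊕ N} {n : N}
    (h : Relation.TransGen
      (fun u v => beforeStrat σ τ u v ∨ beforeLe leG leH u v) (Sum.inr n) y) :
    ∃ n', y = Sum.inr n' ∧ Relation.TransGen (fun u v => τ u v ∨ leH u v) n n' := by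
  induction h with
  | single h =>
    rcases h with (⟨a, b, ha, hb, hab⟩ | ⟨a, b, ha, rfl, hab⟩) | h
    · exact absurd ha (by simp)
    · exact ⟨b, rfl, Relation.TransGen.single (Or.inl ((Sum.inr.inj ha) ▸ hab))⟩
    · obtain ⟨n', rfl, hn⟩ := beforeLe_from_inr hH h
      exact ⟨n', rfl, Relation.TransGen.single (Or.inr hn)⟩
  | tail h1 h2 ih =>
    obtain ⟨n1, rfl, hn1⟩ := ih
    rcases h2 with (⟨a, b, ha, hb, hab⟩ | ⟨a, b, ha, rfl, hab⟩) | h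
    · exact absurd ha (by simp)
    · exact ⟨b, rfl, hn1.tail (Or.inl ((Sum.inr.inj ha) ▸ hab))⟩
    · obtain ⟨n', rfl, hn⟩ := beforeLe_from_inr hH h
      exact ⟨n', rfl, hn1.tail (Or.inr hn)⟩

end Aux

/-- The 'before' tensor of two strategies is a strategy on the 'before' tensor
of the games. -/
theorem before_tensor_strategy {M N : Type*}
    (polG : M → ℤ) (leG : M → M → Prop)
    (polH : N → ℤ) (leH : N → N → Prop)
    (hG : IsPartialOrder M leG) (hH : IsPartialOrder N leH)
    (hGwf : WellFounded (fun m m' => leG m m' ∧ m ≠ m'))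
    (hHwf : WellFounded (fun n n' => leH n n' ∧ n ≠ n'))
    (σ : M → M → Prop) (τ : N → N → Prop)
    (hσ : IsStrategy polG leG σ) (hτ : IsStrategy polH leH τ) :
    IsStrategy (Sum.elim polG polH) (beforeLe leG leH) (beforeStrat σ τ) := by
  obtain ⟨hσr, hσt, hσa, hσp, hσacy⟩ := hσ
  obtain ⟨hτr, hτt, hτa, hτp, hτacy⟩ := hτ
  refine ⟨?_, ?_, ?_, ?_, ?_⟩
  · rintro (m | n)
    · exact Or.inl ⟨m, m, rfl, rfl, hσr m⟩
    · exact Or.inr ⟨n, n, rfl, rfl, hτr n⟩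
  · rintro x y z (⟨a, b, rfl, rfl, hab⟩ | ⟨a, b, rfl, rfl, hab⟩)
      (⟨c, d, hc, rfl, hcd⟩ | ⟨c, d, hc, rfl, hcd⟩)
    · exact Or.inl ⟨a, d, rfl, rfl, hσt a c d ((Sum.inl.inj hc) ▸ hab) hcd⟩
    · exact absurd hc (by simp)
    · exact absurd hc (by simp)
    · exact Or.inr ⟨a, d, rfl, rfl, hτt a c d ((Sum.inr.inj hc) ▸ hab) hcd⟩
  · rintro x y (⟨a, b, rfl, rfl, hab⟩ | ⟨a, b, rfl, rfl, hab⟩)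
      (⟨c, d, hc, hd, hcd⟩ | ⟨c, d, hc, hd, hcd⟩)
    · cases Sum.inl.inj hc; cases Sum.inl.inj hd
      rw [hσa a b hab hcd]
    · exact absurd hc (by simp)
    · exact absurd hc (by simp)
    · cases Sum.inr.inj hc; cases Sum.inr.inj hd
      rw [hτa a b hab hcd]
  · rintro x y (⟨a, b, rfl, rfl, hab⟩ | ⟨a, b, rfl, rfl, hab⟩) hne
    · have := hσp a b hab (fun h => hne (by rw [h]))
      simpa using this
    · have := hτp a b hab (fun h => hne (by rw [h]))
      simpa using this
  · rintro (m | n) y hxy hyx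
    · obtain ⟨m2, rfl, h2⟩ := combined_to_inl hG.trans hyx
      obtain ⟨m3, hm3, h3⟩ := combined_to_inl hG.trans hxy
      cases Sum.inl.inj hm3
      rw [hσacy m m2 h3 h2]
    · obtain ⟨n2, rfl, h2⟩ := combined_from_inr hH.trans hxy
      obtain ⟨n3, hn3, h3⟩ := combined_from_inr hH.trans hyx
      cases Sum.inr.inj hn3
      rw [hτacy n n2 h2 h3]
end
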